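/- For every x ∈ (0, 1/2], one has x(1−x) > (π − R(x)·sin(πx)) / (R(x)·sin(πx)). -/

import Mathlib

open Real Set Filter Topology

/-- The digamma function `ψ(x) = Γ'(x)/Γ(x)`. -/
noncomputable def digamma (x : ℝ) : ℝ := deriv Real.Gamma x / Real.Gamma x

/-- The Ramanujan constant function `R(x) = -2γ - ψ(x) - ψ(1-x)`. -/
noncomputable def ramanujanR (x : ℝ) : ℝ :=
  -2 * Real.eulerMascheroniConstant - digamma x - digamma (1 - x)

/-- The Riemann zeta function as a real series `ζ(s) = Σ_{n=1}^∞ n^{-s}`. -/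
noncomputable def zetaR (s : ℝ) : ℝ := ∑' n : ℕ, 1 / ((n : ℝ) + 1) ^ s

/-- The generalized elliptic integral of the first kind
`K_a(r) = (π/2) Σ_{n=0}^∞ ((a)_n (1-a)_n / (n!)^2) r^(2n)`. -/
noncomputable def Ka (a r : ℝ) : ℝ :=
  Real.pi / 2 * ∑' n : ℕ,
    (Polynomial.eval a (ascPochhammer ℝ n) * Polynomial.eval (1 - a) (ascPochhammer ℝ n)
      / (Nat.factorial n : ℝ) ^ 2) * r ^ (2 * n)

/-- The generalized elliptic integral of the second kind
`E_a(r) = (π/2) Σ_{n=0}^∞ ((a-1)_n (1-a)_n / (n!)^2) r^(2n)`. -/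
noncomputable def Ea (a r : ℝ) : ℝ :=
  Real.pi / 2 * ∑' n : ℕ,
    (Polynomial.eval (a - 1) (ascPochhammer ℝ n) * Polynomial.eval (1 - a) (ascPochhammer ℝ n)
      / (Nat.factorial n : ℝ) ^ 2) * r ^ (2 * n)

/-! Write `t = x (1 - x)`. Euler's product gives
`Γ(x) Γ(1 - x) = t⁻¹ ∏_{j ≥ 1} (1 + t / (j (j + 1)))⁻¹`, and `∏ (1 + u_j) ≥ 1 + ∑ u_j` turns
this into `π / sin (π x) ≤ 1 / (t (1 + t))`. On the other side, convexity of `log Γ` gives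
`ψ(y) ≤ log y`; shifting by `ψ(y + 1) = ψ(y) + 1 / y` eight times yields
`R(x) ≥ ∑_{k < 8} (2k + 1) / (k (k + 1) + t) - 2γ - log (72 + t)`,
which exceeds `1 / (t (1 + t)²)` for `0 < t ≤ 1/4`. Hence `π < (1 + t) R(x) sin (π x)`. -/

open scoped Nat

lemma hasDerivAt_log_Gamma {y : ℝ} (hy : 0 < y) :
    HasDerivAt (log ∘ Gamma) (digamma y) y :=
  ((differentiableAt_Gamma fun m ↦ by linarith [m.cast_nonneg (α := ℝ)]).hasDerivAt).log
    (Gamma_pos_of_pos hy).ne'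

lemma digamma_add_one {y : ℝ} (hy : 0 < y) : digamma (y + 1) = digamma y + 1 / y := by
  have h₁ : HasDerivAt (fun z ↦ log (Gamma (z + 1))) (digamma (y + 1)) y := by
    simpa using (hasDerivAt_log_Gamma (by linarith : 0 < y + 1)).comp_add_const y 1
  have h₂ : HasDerivAt (fun z ↦ (log ∘ Gamma) z + log z) (digamma y + 1 / y) y := by
    rw [one_div]; exact (hasDerivAt_log_Gamma hy).add (hasDerivAt_log hy.ne')
  have heq : (fun z ↦ log (Gamma (z + 1))) =ᶠ[𝓝 y] fun z ↦ (log ∘ Gamma) z + log z := by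
    filter_upwards [eventually_gt_nhds hy] with z hz
    rw [Function.comp_apply, Gamma_add_one hz.ne', log_mul hz.ne' (Gamma_pos_of_pos hz).ne',
      add_comm]
  exact (h₁.congr_of_eventuallyEq heq.symm).unique h₂

lemma digamma_add_nat {y : ℝ} (hy : 0 < y) (n : ℕ) :
    digamma (y + n) = digamma y + ∑ k ∈ Finset.range n, 1 / (y + k) := by
  induction n with
  | zero => simp
  | succ n ih =>
    rw [Nat.cast_succ, ← add_assoc, digamma_add_one (by positivity), ih, Finset.sum_range_succ,
      add_assoc]

-- The derivative of the convex function `log ∘ Γ` at `y` is at most its slope over `[y, y + 1]`,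
-- which is `log y`.
lemma digamma_le_log {y : ℝ} (hy : 0 < y) : digamma y ≤ log y := by
  have h := convexOn_log_Gamma.deriv_le_slope (mem_Ioi.mpr hy) (mem_Ioi.mpr (by linarith))
    (by linarith : y < y + 1) (hasDerivAt_log_Gamma hy).differentiableAt
  rwa [(hasDerivAt_log_Gamma hy).deriv, slope_def_field, Function.comp_apply,
    Function.comp_apply, Gamma_add_one hy.ne', log_mul hy.ne' (Gamma_pos_of_pos hy).ne',
    add_sub_cancel_right, add_sub_cancel_left, div_one] at h

lemma digamma_le_log_add_nat_sub_sum {y : ℝ} (hy : 0 < y) (n : ℕ) :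
    digamma y ≤ log (y + n) - ∑ k ∈ Finset.range n, 1 / (y + k) := by
  linarith [digamma_add_nat hy n, digamma_le_log (by positivity : 0 < y + n)]

lemma sum_sub_log_le_ramanujanR {x : ℝ} (hx₀ : 0 < x) (hx₁ : x < 1) (n : ℕ) :
    ∑ k ∈ Finset.range n, (2 * k + 1) / (k * (k + 1) + x * (1 - x))
      - 2 * eulerMascheroniConstant - log (n * (n + 1) + x * (1 - x)) ≤ ramanujanR x := by
  have hsum : ∑ k ∈ Finset.range n, (2 * k + 1) / (k * (k + 1) + x * (1 - x))
      = ∑ k ∈ Finset.range n, 1 / (x + k) + ∑ k ∈ Finset.range n, 1 / (1 - x + k) := by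
    rw [← Finset.sum_add_distrib]
    refine Finset.sum_congr rfl fun k _ ↦ ?_
    have : (0 : ℝ) ≤ k := k.cast_nonneg
    rw [div_add_div _ _ (by linarith) (by linarith)]
    congr 1 <;> ring
  have hlog : log (n * (n + 1) + x * (1 - x)) = log (x + n) + log (1 - x + n) := by
    rw [← log_mul (by positivity) (by linarith [n.cast_nonneg (α := ℝ)])]
    ring_nf
  rw [hsum, hlog, ramanujanR]
  linarith [digamma_le_log_add_nat_sub_sum hx₀ n,
    digamma_le_log_add_nat_sub_sum (by linarith : 0 < 1 - x) n]

-- Since `∏ j (j + 1) = n! (n + 1)!` and `∑ 1 / (j (j + 1)) = n / (n + 1)`, this is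
-- `∏ (1 + u_j) ≥ 1 + ∑ u_j` for `u_j = t / (j (j + 1))`.
lemma factorial_sq_mul_le_prod {t : ℝ} (ht : 0 ≤ t) (n : ℕ) :
    (n ! : ℝ) ^ 2 * (n + 1 + n * t) ≤ ∏ j ∈ Finset.range n, ((j + 1) * (j + 2) + t) := by
  induction n with
  | zero => simp
  | succ n ih =>
    rw [Finset.prod_range_succ, Nat.factorial_succ]
    push_cast
    have hn : (0 : ℝ) ≤ n := n.cast_nonneg
    calc ((n + 1) * n ! : ℝ) ^ 2 * (n + 1 + 1 + (n + 1) * t)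
        ≤ (n ! : ℝ) ^ 2 * (n + 1 + n * t) * ((n + 1) * (n + 2) + t) := by
          nlinarith [mul_nonneg (mul_nonneg hn (sq_nonneg t)) (sq_nonneg (n ! : ℝ))]
      _ ≤ _ := by gcongr

lemma GammaSeq_mul_GammaSeq_one_sub {x : ℝ} (n : ℕ) :
    GammaSeq x n * GammaSeq (1 - x) n
      = n * (n ! : ℝ) ^ 2 / ∏ j ∈ Finset.range (n + 1), (j * (j + 1) + x * (1 - x)) := by
  rw [GammaSeq, GammaSeq, div_mul_div_comm, ← Finset.prod_mul_distrib]
  congr 1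
  · rw [mul_mul_mul_comm, ← rpow_add' n.cast_nonneg (by norm_num), add_sub_cancel, rpow_one]
    ring
  · exact Finset.prod_congr rfl fun j _ ↦ by ring

lemma GammaSeq_mul_GammaSeq_one_sub_le {x : ℝ} (hx₀ : 0 < x) (hx₁ : x < 1) (n : ℕ) :
    GammaSeq x n * GammaSeq (1 - x) n ≤ 1 / (x * (1 - x) * (1 + x * (1 - x))) := by
  set t := x * (1 - x)
  have ht : 0 < t := mul_pos hx₀ (by linarith)
  have hfac : (0 : ℝ) < (n ! : ℝ) ^ 2 := by positivity
  have hn : (0 : ℝ) ≤ n := n.cast_nonneg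
  rw [GammaSeq_mul_GammaSeq_one_sub, Finset.prod_range_succ']
  push_cast
  rw [div_le_div_iff₀ (by positivity) (by positivity), one_mul]
  calc n * (n ! : ℝ) ^ 2 * (t * (1 + t)) ≤ (n ! : ℝ) ^ 2 * (n + 1 + n * t) * t := by
        nlinarith [mul_pos hfac ht]
    _ ≤ (∏ j ∈ Finset.range n, ((j + 1) * (j + 1 + 1) + t)) * (0 * (0 + 1) + t) := by
        rw [zero_mul, zero_add]
        gcongr
        simpa only [add_assoc, one_add_one_eq_two] using factorial_sq_mul_le_prod ht.le n

lemma pi_div_sin_le {x : ℝ} (hx₀ : 0 < x) (hx₁ : x < 1) :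
    π / sin (π * x) ≤ 1 / (x * (1 - x) * (1 + x * (1 - x))) := by
  rw [← Gamma_mul_Gamma_one_sub]
  exact le_of_tendsto' ((GammaSeq_tendsto_Gamma x).mul (GammaSeq_tendsto_Gamma (1 - x)))
    (GammaSeq_mul_GammaSeq_one_sub_le hx₀ hx₁)

lemma two_mul_eulerMascheroniConstant_add_log_lt {t : ℝ} (ht₀ : 0 ≤ t) (ht : t ≤ 1 / 4) :
    2 * eulerMascheroniConstant + log (72 + t) < 11 / 2 := by
  have hγ := eulerMascheroniConstant_lt_eulerMascheroniSeq' 32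
  have hlog : log (72 + t) - log 64 ≤ (72 + t) / 64 - 1 := by
    rw [← log_div (by positivity) (by norm_num)]
    exact log_le_sub_one_of_pos (by positivity)
  have hpow (n : ℕ) : log (2 ^ n : ℝ) = n * log 2 := by rw [log_pow]
  rw [eulerMascheroniSeq', if_neg (by norm_num), harmonic_eq_sum_Icc] at hγ
  norm_num [Finset.sum_Icc_succ_top] at hγ
  rw [show (32 : ℝ) = 2 ^ 5 by norm_num, hpow] at hγ
  rw [show (64 : ℝ) = 2 ^ 6 by norm_num, hpow] at hlog
  push_cast at hγ hlog
  linarith [log_two_gt_d9]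

lemma one_div_mul_one_add_sq_add_lt_sum {t : ℝ} (ht₀ : 0 < t) (ht : t ≤ 1 / 4) :
    1 / (t * (1 + t) ^ 2) + 11 / 2
      < ∑ k ∈ Finset.range 8, (2 * k + 1) / (k * (k + 1) + t) := by
  have hhead : 36 / 25 + 1 / (t * (1 + t) ^ 2) ≤ 1 / t := by
    rw [div_add_div _ _ (by norm_num) (by positivity), div_le_div_iff₀ (by positivity) ht₀]
    nlinarith [mul_nonneg (mul_nonneg ht₀.le (by linarith : 0 ≤ 1 - 4 * t))
      (by linarith : 0 ≤ 14 + 9 * t)]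
  -- At `t = 1/4` the `k`-th term is `4 / (2k + 1)`, as `k (k + 1) + 1/4 = (k + 1/2)²`.
  have htail (k : ℕ) : 4 / (2 * k + 1) ≤ (2 * k + 1) / (k * (k + 1) + t) := by
    rw [div_le_div_iff₀ (by positivity) (by positivity)]
    nlinarith [k.cast_nonneg (α := ℝ)]
  have hsum : ∑ k ∈ Finset.range 7, 4 / (2 * ((k + 1 : ℕ) : ℝ) + 1) = 184108 / 45045 := by
    norm_num [Finset.sum_range_succ]
  calc 1 / (t * (1 + t) ^ 2) + 11 / 2
      < ∑ k ∈ Finset.range 7, 4 / (2 * ((k + 1 : ℕ) : ℝ) + 1) + 1 / t := by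
        linarith
    _ ≤ ∑ k ∈ Finset.range 7,
          (2 * ((k + 1 : ℕ) : ℝ) + 1) / ((k + 1 : ℕ) * ((k + 1 : ℕ) + 1) + t)
        + (2 * ((0 : ℕ) : ℝ) + 1) / ((0 : ℕ) * ((0 : ℕ) + 1) + t) :=
        add_le_add (Finset.sum_le_sum fun k _ ↦ htail (k + 1)) (by simp)
    _ = _ :=
        (Finset.sum_range_succ' (fun k : ℕ ↦ (2 * (k : ℝ) + 1) / (k * (k + 1) + t)) _).symm

lemma one_div_mul_one_add_sq_lt_ramanujanR {x : ℝ} (hx₀ : 0 < x) (hx₁ : x < 1) :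
    1 / (x * (1 - x) * (1 + x * (1 - x)) ^ 2) < ramanujanR x := by
  have ht₀ : 0 < x * (1 - x) := mul_pos hx₀ (by linarith)
  have ht : x * (1 - x) ≤ 1 / 4 := by nlinarith [sq_nonneg (x - 1 / 2)]
  have hR := sum_sub_log_le_ramanujanR hx₀ hx₁ 8
  norm_num at hR
  linarith [one_div_mul_one_add_sq_add_lt_sum ht₀ ht,
    two_mul_eulerMascheroniConstant_add_log_lt ht₀.le ht]

theorem stmt8 (x : ℝ) (hx : x ∈ Set.Ioc (0 : ℝ) (1/2)) :
    (Real.pi - ramanujanR x * Real.sin (Real.pi * x)) /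
        (ramanujanR x * Real.sin (Real.pi * x)) <
      x * (1 - x) := by
  obtain ⟨hx₀, hx₂⟩ := hx
  have hx₁ : x < 1 := by linarith
  set t := x * (1 - x)
  have ht : 0 < t := mul_pos hx₀ (by linarith)
  have hsin : 0 < sin (π * x) := sin_pos_of_pos_of_lt_pi (by positivity) (by nlinarith [pi_pos])
  have hpi : π / sin (π * x) < (1 + t) * ramanujanR x := calc
    π / sin (π * x) ≤ 1 / (t * (1 + t)) := pi_div_sin_le hx₀ hx₁
    _ = (1 + t) * (1 / (t * (1 + t) ^ 2)) := by field_simp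
    _ < (1 + t) * ramanujanR x := by
      gcongr; exact one_div_mul_one_add_sq_lt_ramanujanR hx₀ hx₁
  rw [div_lt_iff₀ hsin] at hpi
  have hRs : 0 < ramanujanR x * sin (π * x) := by nlinarith [pi_pos]
  rw [div_lt_iff₀ hRs]
  linarith
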